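/- arXiv:2106.02784 — 2 statements merged into one kernel-verified Lean document; each statement's English description precedes it below -/
import Mathlib

section
/- Let μₑ be the multiplicative exterior measure on (0,∞) and let |·|ₑ denote Lebesgue outer measure. For U ⊆ (0,∞): μₑ(U) = 1 if and only if the Lebesgue outer measure of U is 0. -/
open scoped ENNReal
open Set

noncomputable section

/-- Infinite product of a sequence in `[1,∞]` (or `[0,∞]`), as the supremum of
partial products. -/
def iProd (a : ℕ → ℝ≥0∞) : ℝ≥0∞ := ⨆ N : ℕ, ∏ j ∈ Finset.range N, a j

/-- Unordered double infinite product: supremum of products over finite subsets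
of `ℕ × ℕ`. -/
def unordProd (a : ℕ × ℕ → ℝ≥0∞) : ℝ≥0∞ := ⨆ F : Finset (ℕ × ℕ), ∏ p ∈ F, a p

/-- `c` codes a countable cover of `E` by closed intervals `[a_j, b_j] ⊆ (0,∞)`. -/
def IsIntervalCover (E : Set ℝ) (c : ℕ → ℝ × ℝ) : Prop :=
  (∀ j, 0 < (c j).1 ∧ (c j).1 ≤ (c j).2) ∧ E ⊆ ⋃ j, Set.Icc (c j).1 (c j).2

/-- The multiplicative exterior measure on `(0,∞)`. -/
def muE (E : Set ℝ) : ℝ≥0∞ :=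
  ⨅ c : {c : ℕ → ℝ × ℝ // IsIntervalCover E c},
    iProd (fun j => ENNReal.ofReal ((c.1 j).2 / (c.1 j).1))

/-- `E ⊆ (0,∞)` is μ-measurable: for every `ε > 0` there is an open set
`G ⊆ (0,∞)` containing `E` with `μₑ(G \ E) < 1 + ε`. -/
def MuMeasurable (E : Set ℝ) : Prop :=
  E ⊆ Set.Ioi (0:ℝ) ∧ ∀ ε : ℝ, 0 < ε →
    ∃ G : Set ℝ, IsOpen G ∧ G ⊆ Set.Ioi (0:ℝ) ∧ E ⊆ G ∧
      muE (G \ E) < ENNReal.ofReal (1 + ε)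

/-- Extended exponential `[0,∞] → [1,∞]`, with `exp ∞ = ∞`. -/
def expE (t : ℝ≥0∞) : ℝ≥0∞ :=
  if t = ⊤ then ⊤ else ENNReal.ofReal (Real.exp t.toReal)

/-! The logarithm turns a cover of `U` by intervals `[a, b]` with `∏ b / a ≤ exp δ` into a cover
of `log '' U` by the intervals `[log a, log b]`, of total length `≤ δ`, and `exp` turns such a
cover back. So `μₑ(U) = 1` says exactly that `log '' U` is Lebesgue-null, and since `log` and `exp`
are differentiable, hence map null sets to null sets, this is the same as `U` being null. -/

open MeasureTheory

lemma one_le_muE (E : Set ℝ) : 1 ≤ muE E :=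
  le_iInf fun _ => le_iSup_of_le 0 (by simp)

lemma exists_Ioc_cover_tsum_lt {V : Set ℝ} {r : ℝ≥0∞} (h : volume V < r) :
    ∃ a b : ℕ → ℝ, V ⊆ ⋃ n, Ioc (a n) (b n) ∧ ∑' n, ENNReal.ofReal (b n - a n) < r := by
  set f := StieltjesFunction.id
  have hV : volume V = f.outer V := by
    rw [Real.volume_val, StieltjesFunction.measure_def]; rfl
  obtain ⟨t, hVt, ht⟩ : ∃ t : ℕ → Set ℝ, V ⊆ ⋃ n, t n ∧ ∑' n, f.length (t n) < r := by
    simpa [hV, StieltjesFunction.outer, OuterMeasure.ofFunction_apply, iInf_lt_iff] using h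
  obtain ⟨ε, hε, hεr⟩ := ENNReal.lt_iff_exists_add_pos_lt.1 ht
  obtain ⟨e, he, hesum⟩ := ENNReal.exists_pos_sum_of_countable' (ENNReal.coe_pos.2 hε).ne' ℕ
  have hbot : botSet (R := ℝ) = ∅ :=
    eq_empty_of_forall_notMem fun x => notMem_botSet_of_lt (sub_one_lt x)
  have hIoc : ∀ n, ∃ p : ℝ × ℝ, t n ⊆ Ioc p.1 p.2 ∧
      ENNReal.ofReal (p.2 - p.1) < f.length (t n) + e n := by
    intro n
    have hfin : f.length (t n) ≠ ⊤ := ne_top_of_le_ne_top ht.ne_top (ENNReal.le_tsum n)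
    have hlt : (⨅ (a) (b) (_ : t n \ botSet ⊆ Ioc a b),
        ENNReal.ofReal (f b - f a)) < f.length (t n) + e n := by
      rw [← StieltjesFunction.length_eq]; exact ENNReal.lt_add_right hfin (he n).ne'
    simp only [iInf_lt_iff, hbot, sdiff_empty] at hlt
    obtain ⟨a, b, hsub, hab⟩ := hlt
    exact ⟨(a, b), hsub, hab⟩
  choose p hpt hpe using hIoc
  refine ⟨fun n => (p n).1, fun n => (p n).2, hVt.trans (iUnion_mono hpt), ?_⟩
  calc ∑' n, ENNReal.ofReal ((p n).2 - (p n).1)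
      ≤ ∑' n, (f.length (t n) + e n) := ENNReal.tsum_le_tsum fun n => (hpe n).le
    _ = ∑' n, f.length (t n) + ∑' n, e n := ENNReal.tsum_add
    _ < r := lt_of_le_of_lt (by gcongr) hεr

def HasIccCoverLengthLE (V : Set ℝ) (δ : ℝ) : Prop :=
  ∃ d : ℕ → ℝ × ℝ, (∀ j, (d j).1 ≤ (d j).2) ∧ V ⊆ ⋃ j, Icc (d j).1 (d j).2 ∧
    ∑' j, ENNReal.ofReal ((d j).2 - (d j).1) ≤ ENNReal.ofReal δ

def HasIccCoverRatioLE (U : Set ℝ) (q : ℝ) : Prop :=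
  ∃ c : ℕ → ℝ × ℝ, IsIntervalCover U c ∧
    iProd (fun j => ENNReal.ofReal ((c j).2 / (c j).1)) ≤ ENNReal.ofReal q

lemma volume_eq_zero_iff_forall_hasIccCoverLengthLE (V : Set ℝ) :
    volume V = 0 ↔ ∀ δ > 0, HasIccCoverLengthLE V δ := by
  constructor
  · intro hV δ hδ
    obtain ⟨a, b, hVab, hsum⟩ :=
      exists_Ioc_cover_tsum_lt (hV.trans_lt (ENNReal.ofReal_pos.2 hδ))
    have hlen : ∀ n, ENNReal.ofReal (max (a n) (b n) - a n) = ENNReal.ofReal (b n - a n) := by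
      intro n
      rcases le_total (a n) (b n) with hab | hba
      · rw [max_eq_right hab]
      · rw [max_eq_left hba, sub_self, ENNReal.ofReal_zero,
          ENNReal.ofReal_of_nonpos (sub_nonpos.2 hba)]
    refine ⟨fun n => (a n, max (a n) (b n)), fun n => le_max_left _ _, ?_, ?_⟩
    · exact hVab.trans (iUnion_mono fun n =>
        Ioc_subset_Icc_self.trans (Icc_subset_Icc_right (le_max_right _ _)))
    · simpa only [hlen] using hsum.le
  · intro h
    refine nonpos_iff_eq_zero.1 (ENNReal.le_of_forall_pos_le_add fun ε hε _ => ?_)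
    obtain ⟨d, -, hVd, hsum⟩ := h ε hε
    calc volume V ≤ ∑' j, volume (Icc (d j).1 (d j).2) :=
          (measure_mono hVd).trans (measure_iUnion_le _)
      _ = ∑' j, ENNReal.ofReal ((d j).2 - (d j).1) := by simp only [Real.volume_Icc]
      _ ≤ 0 + ε := by simpa using hsum

lemma muE_le_one_iff (U : Set ℝ) : muE U ≤ 1 ↔ ∀ δ > 0, HasIccCoverRatioLE U (Real.exp δ) := by
  constructor
  · intro h δ hδ
    have hlt : muE U < ENNReal.ofReal (Real.exp δ) :=
      h.trans_lt (ENNReal.one_lt_ofReal.2 (Real.one_lt_exp_iff.2 hδ))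
    obtain ⟨⟨c, hc⟩, hcq⟩ := iInf_lt_iff.1 hlt
    exact ⟨c, hc, hcq.le⟩
  · intro h
    refine ENNReal.le_of_forall_pos_le_add fun ε hε _ => ?_
    obtain ⟨c, hc, hcq⟩ := h _ (Real.log_pos (lt_add_of_pos_right 1 hε))
    calc muE U ≤ iProd (fun j => ENNReal.ofReal ((c j).2 / (c j).1)) := iInf_le_of_le ⟨c, hc⟩ le_rfl
      _ ≤ ENNReal.ofReal (Real.exp (Real.log (1 + ε))) := hcq
      _ = 1 + ε := by
        rw [Real.exp_log (by positivity), ENNReal.ofReal_add zero_le_one ε.coe_nonneg,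
          ENNReal.ofReal_one, ENNReal.ofReal_coe_nnreal]

lemma iProd_ofReal_exp_le_iff {x : ℕ → ℝ} (hx : ∀ j, 0 ≤ x j) {δ : ℝ} (hδ : 0 ≤ δ) :
    iProd (fun j => ENNReal.ofReal (Real.exp (x j))) ≤ ENNReal.ofReal (Real.exp δ) ↔
      ∑' j, ENNReal.ofReal (x j) ≤ ENNReal.ofReal δ := by
  rw [iProd, iSup_le_iff, ENNReal.tsum_eq_iSup_nat, iSup_le_iff]
  refine forall_congr' fun N => ?_
  rw [← ENNReal.ofReal_prod_of_nonneg fun j _ => (Real.exp_pos _).le, ← Real.exp_sum,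
    ENNReal.ofReal_le_ofReal_iff (Real.exp_pos _).le, Real.exp_le_exp,
    ← ENNReal.ofReal_sum_of_nonneg fun j _ => hx j, ENNReal.ofReal_le_ofReal_iff hδ]

lemma hasIccCoverRatioLE_exp_iff {U : Set ℝ} (hU : U ⊆ Ioi 0) {δ : ℝ} (hδ : 0 ≤ δ) :
    HasIccCoverRatioLE U (Real.exp δ) ↔ HasIccCoverLengthLE (Real.log '' U) δ := by
  constructor
  · rintro ⟨c, ⟨hc, hUc⟩, hprod⟩
    have hlog : ∀ j, Real.log (c j).1 ≤ Real.log (c j).2 := fun j =>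
      Real.log_le_log (hc j).1 (hc j).2
    have hratio : ∀ j, (c j).2 / (c j).1 = Real.exp (Real.log (c j).2 - Real.log (c j).1) :=
      fun j => by
        rw [Real.exp_sub, Real.exp_log (hc j).1, Real.exp_log ((hc j).1.trans_le (hc j).2)]
    refine ⟨fun j => (Real.log (c j).1, Real.log (c j).2), hlog, ?_, ?_⟩
    · rintro _ ⟨u, hu, rfl⟩
      obtain ⟨j, hj⟩ := mem_iUnion.1 (hUc hu)
      exact mem_iUnion.2 ⟨j, Real.log_le_log (hc j).1 hj.1,
        Real.log_le_log ((hc j).1.trans_le hj.1) hj.2⟩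
    · simp only [hratio] at hprod
      exact (iProd_ofReal_exp_le_iff (fun j => sub_nonneg.2 (hlog j)) hδ).1 hprod
  · rintro ⟨d, hd, hUd, hsum⟩
    refine ⟨fun j => (Real.exp (d j).1, Real.exp (d j).2),
      ⟨fun j => ⟨Real.exp_pos _, Real.exp_le_exp.2 (hd j)⟩, ?_⟩, ?_⟩
    · intro u hu
      obtain ⟨j, hj⟩ := mem_iUnion.1 (hUd (mem_image_of_mem _ hu))
      rw [← Real.exp_log (hU hu)]
      exact mem_iUnion.2 ⟨j, Real.exp_le_exp.2 hj.1, Real.exp_le_exp.2 hj.2⟩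
    · simp only [← Real.exp_sub]
      exact (iProd_ofReal_exp_le_iff (fun j => sub_nonneg.2 (hd j)) hδ).2 hsum

lemma volume_log_image_eq_zero_iff {U : Set ℝ} (hU : U ⊆ Ioi 0) :
    volume (Real.log '' U) = 0 ↔ volume U = 0 := by
  constructor
  · intro h
    have hU_eq : Real.exp '' (Real.log '' U) = U := by
      rw [image_image]; exact EqOn.image_eq_self fun u hu => Real.exp_log (hU hu)
    rw [← hU_eq]
    exact addHaar_image_eq_zero_of_differentiableOn_of_addHaar_eq_zero volume
      Real.differentiable_exp.differentiableOn h
  · exact addHaar_image_eq_zero_of_differentiableOn_of_addHaar_eq_zero volume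
      (Real.differentiableOn_log.mono fun u hu => (hU hu).ne')

theorem stmt15 (U : Set ℝ) (hU : U ⊆ Set.Ioi (0:ℝ)) :
    muE U = 1 ↔ MeasureTheory.volume U = 0 := by
  calc muE U = 1 ↔ muE U ≤ 1 := ⟨le_of_eq, fun h => le_antisymm h (one_le_muE U)⟩
    _ ↔ ∀ δ > 0, HasIccCoverRatioLE U (Real.exp δ) := muE_le_one_iff U
    _ ↔ ∀ δ > 0, HasIccCoverLengthLE (Real.log '' U) δ :=
      forall₂_congr fun _ hδ => hasIccCoverRatioLE_exp_iff hU hδ.le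
    _ ↔ volume (Real.log '' U) = 0 := (volume_eq_zero_iff_forall_hasIccCoverLengthLE _).symm
    _ ↔ volume U = 0 := volume_log_image_eq_zero_iff hU
end
end

section
/- A set E ⊆ (0,∞) is μ-measurable with respect to the multiplicative exterior measure μₑ if and only if E is Lebesgue measurable, and in that case μ(E) = exp(∫_E (1/x) dx), where the integral is the Lebesgue integral (with exp(+∞) interpreted as +∞). -/
open scoped ENNReal
open Set

noncomputable section

/-!
Taking logarithms turns `μₑ` into the exponential of Lebesgue outer measure: a cover of `E` by
intervals `[a, b]` is a cover of `log E` by the intervals `[log a, log b]`, and the product of the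
ratios `b / a` is the exponential of the sum of their lengths. As `exp` is a diffeomorphism of `ℝ`
onto `(0, ∞)`, it matches open sets and null sets on both sides, so μ-measurability of `E` becomes
the outer approximation criterion for Lebesgue measurability of `log E`, and the substitution
`x = eᵗ` gives `vol (log E) = ∫_E dx / x`.
-/

open MeasureTheory

lemma expE_eq_exp (t : ℝ≥0∞) : expE t = EReal.exp t := by
  rcases eq_or_ne t ⊤ with rfl | ht
  · rfl
  · lift t to NNReal using ht
    simp [expE, EReal.coe_nnreal_eq_coe_real]

lemma continuous_expE : Continuous expE := by
  rw [funext expE_eq_exp]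
  exact ENNReal.continuous_exp.comp continuous_coe_ennreal_ereal

lemma monotone_expE : Monotone expE := fun s t hst => by
  simpa only [expE_eq_exp, EReal.exp_le_exp_iff, EReal.coe_ennreal_le_coe_ennreal_iff] using hst

lemma expE_zero : expE 0 = 1 := by simp [expE_eq_exp]

lemma expE_ofReal {x : ℝ} (hx : 0 ≤ x) : expE (ENNReal.ofReal x) = ENNReal.ofReal (Real.exp x) := by
  simp [expE_eq_exp, EReal.coe_ennreal_ofReal, max_eq_left hx]

lemma expE_add (s t : ℝ≥0∞) : expE (s + t) = expE s * expE t := by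
  simp [expE_eq_exp, EReal.coe_ennreal_add, EReal.exp_add]

lemma expE_iInf {ι : Sort*} (u : ι → ℝ≥0∞) : expE (⨅ i, u i) = ⨅ i, expE (u i) :=
  monotone_expE.map_iInf_of_continuousAt continuous_expE.continuousAt rfl

lemma iProd_expE (x : ℕ → ℝ≥0∞) : iProd (fun j => expE (x j)) = expE (∑' j, x j) := by
  have hprod : ∀ N, ∏ j ∈ Finset.range N, expE (x j) = expE (∑ j ∈ Finset.range N, x j) := by
    intro N
    induction N with
    | zero => simp [expE_zero]
    | succ N ih => rw [Finset.prod_range_succ, Finset.sum_range_succ, ih, expE_add]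
  simp only [iProd, hprod]
  exact iSup_eq_of_tendsto (monotone_expE.comp fun m n hmn => by gcongr)
    ((continuous_expE.tendsto _).comp (ENNReal.tendsto_nat_tsum x))

lemma expE_lt_ofReal_iff {t : ℝ≥0∞} {r : ℝ} (hr : 0 < r) :
    expE t < ENNReal.ofReal r ↔ t < ENNReal.ofReal (Real.log r) := by
  rw [expE_eq_exp, ← Real.exp_log hr, ← EReal.exp_coe, EReal.exp_lt_exp_iff, Real.log_exp]
  rcases le_total (Real.log r) 0 with h0 | h0
  · simp [ENNReal.ofReal_of_nonpos h0,
      (EReal.coe_le_coe_iff.2 h0).trans (EReal.coe_ennreal_nonneg t)]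
  · rw [← EReal.coe_ennreal_lt_coe_ennreal_iff, EReal.coe_ennreal_ofReal, max_eq_left h0]

def IsIccCover (A : Set ℝ) (d : ℕ → ℝ × ℝ) : Prop :=
  (∀ j, (d j).1 ≤ (d j).2) ∧ A ⊆ ⋃ j, Icc (d j).1 (d j).2

lemma exists_Icc_superset_of_length_lt {s : Set ℝ} {r : ℝ≥0∞}
    (h : StieltjesFunction.id.length s < r) :
    ∃ a b, a ≤ b ∧ s ⊆ Icc a b ∧ ENNReal.ofReal (b - a) < r := by
  have hbot : (botSet : Set ℝ) = ∅ := eq_empty_of_forall_notMem fun x hx => not_isBot x hx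
  simp only [StieltjesFunction.length_eq, hbot, sdiff_empty, iInf_lt_iff] at h
  obtain ⟨a, b, hs, hr⟩ := h
  rcases le_total a b with hab | hba
  · exact ⟨a, b, hab, hs.trans Ioc_subset_Icc_self, hr⟩
  · refine ⟨a, a, le_rfl, (hs.trans (Ioc_eq_empty_of_le hba).subset).trans (empty_subset _), ?_⟩
    simpa using zero_le.trans_lt hr

lemma volume_eq_iInf_isIccCover (A : Set ℝ) :
    volume A = ⨅ d : {d // IsIccCover A d}, ∑' j, ENNReal.ofReal ((d.1 j).2 - (d.1 j).1) := by
  refine le_antisymm (le_iInf fun d => ?_) ?_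
  · calc volume A ≤ ∑' j, volume (Icc (d.1 j).1 (d.1 j).2) :=
          (measure_mono d.2.2).trans (measure_iUnion_le _)
      _ = _ := by simp only [Real.volume_Icc]
  · -- Lebesgue outer measure is built from covers by arbitrary sets, each measured by the length
    -- of its smallest enclosing `Ioc`.
    have hvol : volume A = StieltjesFunction.id.outer A := by
      rw [Real.volume_eq_stieltjes_id, StieltjesFunction.measure_def]; rfl
    rw [hvol, StieltjesFunction.outer, OuterMeasure.ofFunction_apply]
    refine le_iInf₂ fun t hAt => ENNReal.le_of_forall_pos_le_add fun ε hε hfin => ?_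
    obtain ⟨δ, hδ, hδε⟩ := ENNReal.exists_pos_sum_of_countable' (ε := ε)
      (ENNReal.coe_ne_zero.2 hε.ne') ℕ
    have hlt : ∀ n, StieltjesFunction.id.length (t n) < StieltjesFunction.id.length (t n) + δ n :=
      fun n => ENNReal.lt_add_right (ne_top_of_le_ne_top hfin.ne (ENNReal.le_tsum n)) (hδ n).ne'
    choose a b hab hta hlen using fun n => exists_Icc_superset_of_length_lt (hlt n)
    calc ⨅ d : {d // IsIccCover A d}, ∑' j, ENNReal.ofReal ((d.1 j).2 - (d.1 j).1)
        ≤ ∑' n, ENNReal.ofReal (b n - a n) :=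
          iInf_le_of_le ⟨fun n => (a n, b n), hab, hAt.trans (iUnion_mono hta)⟩ le_rfl
      _ ≤ ∑' n, (StieltjesFunction.id.length (t n) + δ n) :=
          ENNReal.tsum_le_tsum fun n => (hlen n).le
      _ ≤ _ := by rw [ENNReal.tsum_add]; gcongr

lemma IsIccCover.isIntervalCover_exp {E : Set ℝ} (hE : E ⊆ Ioi 0) {d : ℕ → ℝ × ℝ}
    (hd : IsIccCover (Real.exp ⁻¹' E) d) :
    IsIntervalCover E (fun j => (Real.exp (d j).1, Real.exp (d j).2)) := by
  refine ⟨fun j => ⟨Real.exp_pos _, Real.exp_le_exp.2 (hd.1 j)⟩, fun x hx => ?_⟩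
  have hx' : Real.log x ∈ Real.exp ⁻¹' E := by simpa [Real.exp_log (hE hx)] using hx
  obtain ⟨j, hj⟩ := mem_iUnion.1 (hd.2 hx')
  rw [← Real.exp_log (hE hx)]
  exact mem_iUnion.2 ⟨j, Real.exp_le_exp.2 hj.1, Real.exp_le_exp.2 hj.2⟩

lemma IsIntervalCover.isIccCover_log {E : Set ℝ} {c : ℕ → ℝ × ℝ} (hc : IsIntervalCover E c) :
    IsIccCover (Real.exp ⁻¹' E) (fun j => (Real.log (c j).1, Real.log (c j).2)) := by
  refine ⟨fun j => Real.log_le_log (hc.1 j).1 (hc.1 j).2, fun y hy => ?_⟩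
  obtain ⟨j, hj⟩ := mem_iUnion.1 (hc.2 hy)
  rw [← Real.log_exp y]
  exact mem_iUnion.2 ⟨j, Real.log_le_log (hc.1 j).1 hj.1, Real.log_le_log (Real.exp_pos y) hj.2⟩

lemma muE_eq_expE_volume {E : Set ℝ} (hE : E ⊆ Ioi 0) :
    muE E = expE (volume (Real.exp ⁻¹' E)) := by
  have hratio : ∀ c : {c // IsIntervalCover E c}, ∀ j, ENNReal.ofReal ((c.1 j).2 / (c.1 j).1)
      = expE (ENNReal.ofReal (Real.log (c.1 j).2 - Real.log (c.1 j).1)) := fun c j => by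
    obtain ⟨ha, hab⟩ := c.2.1 j
    rw [expE_ofReal (sub_nonneg.2 (Real.log_le_log ha hab)), Real.exp_sub,
      Real.exp_log (ha.trans_le hab), Real.exp_log ha]
  simp only [muE, hratio, iProd_expE, ← expE_iInf, volume_eq_iInf_isIccCover]
  congr 1
  refine le_antisymm (le_iInf fun d => ?_) (le_iInf fun c => ?_)
  · refine iInf_le_of_le ⟨_, d.2.isIntervalCover_exp hE⟩ (le_of_eq (tsum_congr fun j => ?_))
    simp only [Real.log_exp]
  · exact iInf_le_of_le ⟨_, c.2.isIccCover_log⟩ le_rfl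

lemma image_exp_preimage {E : Set ℝ} (hE : E ⊆ Ioi 0) : Real.exp '' (Real.exp ⁻¹' E) = E :=
  image_preimage_eq_of_subset (Real.range_exp ▸ hE)

lemma quasiMeasurePreserving_exp : Measure.QuasiMeasurePreserving Real.exp volume volume := by
  refine ⟨Real.measurable_exp, Measure.AbsolutelyContinuous.mk fun s hs hs0 => ?_⟩
  rw [Measure.map_apply Real.measurable_exp hs]
  have hsub : Real.exp ⁻¹' s ⊆ Real.log '' (s ∩ Ioi 0) :=
    fun y hy => ⟨Real.exp y, ⟨hy, Real.exp_pos y⟩, Real.log_exp y⟩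
  refine measure_mono_null hsub (addHaar_image_eq_zero_of_differentiableOn_of_addHaar_eq_zero
    volume (fun x hx => (Real.differentiableAt_log (ne_of_gt hx.2)).differentiableWithinAt)
    (measure_mono_null inter_subset_left hs0))

lemma ae_eq_image_exp {s t : Set ℝ} (h : s =ᵐ[volume] t) :
    Real.exp '' s =ᵐ[volume] Real.exp '' t := by
  rw [← measure_symmDiff_eq_zero_iff, ← image_symmDiff Real.exp_injective] at *
  exact addHaar_image_eq_zero_of_differentiableOn_of_addHaar_eq_zero volume
    Real.differentiable_exp.differentiableOn h

lemma nullMeasurableSet_preimage_exp_iff {E : Set ℝ} (hE : E ⊆ Ioi 0) :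
    NullMeasurableSet (Real.exp ⁻¹' E) volume ↔ NullMeasurableSet E volume := by
  refine ⟨fun ⟨t, ht, hAt⟩ => ?_, fun h => h.preimage quasiMeasurePreserving_exp⟩
  rw [← image_exp_preimage hE]
  exact ((Real.continuous_exp.measurableEmbedding Real.exp_injective).measurableSet_image.2
    ht).nullMeasurableSet.congr (ae_eq_image_exp hAt).symm

lemma setLIntegral_inv_image_exp {C : Set ℝ} (hC : MeasurableSet C) :
    ∫⁻ x in Real.exp '' C, ENNReal.ofReal x⁻¹ = volume C := by
  rw [lintegral_image_eq_lintegral_abs_deriv_mul hC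
    (fun x _ => (Real.hasDerivAt_exp x).hasDerivWithinAt) Real.exp_injective.injOn,
    ← setLIntegral_one]
  refine setLIntegral_congr_fun hC fun x _ => ?_
  rw [abs_of_pos (Real.exp_pos x), ← ENNReal.ofReal_mul (Real.exp_pos x).le,
    mul_inv_cancel₀ (Real.exp_ne_zero x), ENNReal.ofReal_one]

lemma volume_preimage_exp_eq_setLIntegral {E : Set ℝ} (hE : E ⊆ Ioi 0)
    (h : NullMeasurableSet E volume) :
    volume (Real.exp ⁻¹' E) = ∫⁻ x in E, ENNReal.ofReal x⁻¹ := by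
  obtain ⟨C, hC, hAC⟩ := (nullMeasurableSet_preimage_exp_iff hE).2 h
  calc volume (Real.exp ⁻¹' E) = volume C := measure_congr hAC
    _ = ∫⁻ x in Real.exp '' C, ENNReal.ofReal x⁻¹ := (setLIntegral_inv_image_exp hC).symm
    _ = ∫⁻ x in E, ENNReal.ofReal x⁻¹ := by
      rw [← image_exp_preimage hE]
      exact setLIntegral_congr (ae_eq_image_exp hAC).symm

section OpenApproximation

variable {α : Type*} [MeasurableSpace α] [TopologicalSpace α] {μ : Measure α} {A : Set α}

theorem MeasureTheory.NullMeasurableSet.exists_isOpen_sdiff_lt [μ.OuterRegular] [SigmaFinite μ]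
    (hA : NullMeasurableSet A μ) {ε : ℝ≥0∞} (hε : ε ≠ 0) :
    ∃ U ⊇ A, IsOpen U ∧ μ (U \ A) < ε := by
  set C := toMeasurable μ A
  have hC : MeasurableSet C := measurableSet_toMeasurable μ A
  obtain ⟨δ, hδ, hδε⟩ := ENNReal.exists_pos_sum_of_countable' hε ℕ
  have hfin : ∀ n, μ (C ∩ spanningSets μ n) ≠ ⊤ := fun n =>
    ne_top_of_le_ne_top (measure_spanningSets_lt_top μ n).ne (measure_mono inter_subset_right)
  choose U hCU hU _ hUC using fun n =>
    (hC.inter (measurableSet_spanningSets μ n)).exists_isOpen_sdiff_lt (hfin n) (hδ n).ne'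
  have hCsub : C ⊆ ⋃ n, U n := fun x hx => by
    obtain ⟨n, hn⟩ := mem_iUnion.1 ((iUnion_spanningSets μ).symm ▸ mem_univ x)
    exact mem_iUnion.2 ⟨n, hCU n ⟨hx, hn⟩⟩
  refine ⟨⋃ n, U n, (subset_toMeasurable μ A).trans hCsub, isOpen_iUnion hU, ?_⟩
  have hdiff : (⋃ n, U n) \ C ⊆ ⋃ n, U n \ (C ∩ spanningSets μ n) := fun x ⟨hxU, hxC⟩ => by
    obtain ⟨n, hn⟩ := mem_iUnion.1 hxU
    exact mem_iUnion.2 ⟨n, hn, fun h => hxC h.1⟩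
  calc μ ((⋃ n, U n) \ A) = μ ((⋃ n, U n) \ C) :=
        measure_congr (Filter.EventuallyEq.rfl.diff hA.toMeasurable_ae_eq.symm)
    _ ≤ ∑' n, μ (U n \ (C ∩ spanningSets μ n)) := (measure_mono hdiff).trans (measure_iUnion_le _)
    _ ≤ ∑' n, δ n := ENNReal.tsum_le_tsum fun n => (hUC n).le
    _ < ε := hδε

theorem nullMeasurableSet_of_forall_exists_isOpen_sdiff_lt [OpensMeasurableSpace α]
    (h : ∀ ε : ℝ≥0∞, 0 < ε → ∃ U ⊇ A, IsOpen U ∧ μ (U \ A) < ε) : NullMeasurableSet A μ := by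
  choose U hAU hU hUA using fun n : ℕ =>
    h (n : ℝ≥0∞)⁻¹ (ENNReal.inv_pos.2 (ENNReal.natCast_ne_top n))
  have hnull : μ ((⋂ n, U n) \ A) = 0 :=
    le_antisymm (ge_of_tendsto' ENNReal.tendsto_inv_nat_nhds_zero fun n =>
      (measure_mono (sdiff_subset_sdiff_left (iInter_subset U n))).trans (hUA n).le) zero_le
  refine (MeasurableSet.iInter fun n => (hU n).measurableSet).nullMeasurableSet.congr ?_
  exact ae_eq_set.2 ⟨hnull, by simp [sdiff_eq_empty.2 (subset_iInter hAU)]⟩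

end OpenApproximation

lemma muMeasurable_iff {E : Set ℝ} (hE : E ⊆ Ioi 0) :
    MuMeasurable E ↔ ∀ ε : ℝ≥0∞, 0 < ε →
      ∃ U ⊇ Real.exp ⁻¹' E, IsOpen U ∧ volume (U \ Real.exp ⁻¹' E) < ε := by
  have hmuE : ∀ G ⊆ Ioi 0, muE (G \ E) = expE (volume (Real.exp ⁻¹' G \ Real.exp ⁻¹' E)) :=
    fun G hG => by rw [muE_eq_expE_volume (sdiff_subset.trans hG), preimage_sdiff]
  constructor
  · rintro ⟨-, h⟩ ε hε
    obtain ⟨r, -, hr0, hrε⟩ := ENNReal.lt_iff_exists_real_btwn.1 hε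
    have hr : 0 < r := ENNReal.ofReal_pos.1 hr0
    obtain ⟨G, hG, hG0, hEG, hGE⟩ := h (Real.exp r - 1) (by linarith [Real.add_one_lt_exp hr.ne'])
    rw [hmuE G hG0, add_sub_cancel, expE_lt_ofReal_iff (Real.exp_pos r), Real.log_exp] at hGE
    exact ⟨Real.exp ⁻¹' G, preimage_mono hEG, hG.preimage Real.continuous_exp, hGE.trans hrε⟩
  · refine fun h => ⟨hE, fun ε hε => ?_⟩
    have hlog : 0 < Real.log (1 + ε) := Real.log_pos (by linarith)
    obtain ⟨U, hAU, hU, hUA⟩ := h _ (ENNReal.ofReal_pos.2 hlog)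
    have hG0 : Real.exp '' U ⊆ Ioi 0 := (image_subset_range _ _).trans Real.range_exp.subset
    refine ⟨Real.exp '' U, Real.isOpenEmbedding_exp.isOpenMap U hU, hG0,
      (image_exp_preimage hE).superset.trans (image_mono hAU), ?_⟩
    rwa [hmuE _ hG0, preimage_image_eq U Real.exp_injective, expE_lt_ofReal_iff (by linarith)]

theorem stmt16 (E : Set ℝ) (hE : E ⊆ Set.Ioi (0:ℝ)) :
    (MuMeasurable E ↔ MeasureTheory.NullMeasurableSet E MeasureTheory.volume) ∧
    (MuMeasurable E →
      muE E = expE (∫⁻ x in E, ENNReal.ofReal x⁻¹ ∂MeasureTheory.volume)) := by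
  have hiff : MuMeasurable E ↔ NullMeasurableSet E volume := by
    rw [muMeasurable_iff hE, ← nullMeasurableSet_preimage_exp_iff hE]
    exact ⟨nullMeasurableSet_of_forall_exists_isOpen_sdiff_lt,
      fun h ε hε => h.exists_isOpen_sdiff_lt hε.ne'⟩
  refine ⟨hiff, fun h => ?_⟩
  rw [muE_eq_expE_volume hE, volume_preimage_exp_eq_setLIntegral hE (hiff.1 h)]

end
end
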